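/- Every K-trivially valued C-minimal R-module (M,v) is henselian, i.e., for every separable s ∈ R the map x ↦ x.s is a bijection of M_{>θ}. -/

import Mathlib

open FirstOrder Language Set

universe u v w x y

/-! ## Skew polynomial rings `K[t;φ]` -/

/-- `(R, ι, t)` realizes the skew polynomial ring `K[t;φ]` : the commutation rule
`a·t = t·a^φ` holds, and every element of `R` is uniquely a finite sum `∑ tⁱ·aᵢ`
with right-hand coefficients `aᵢ ∈ K`. -/
structure IsSkewPolyRing (K : Type u) [Field K] (φ : K →+* K) (R : Type v) [Ring R]
    (ι : K →+* R) (t : R) : Prop where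
  commute_rule : ∀ a : K, ι a * t = t * ι (φ a)
  unique_rep : ∀ r : R, ∃! c : ℕ →₀ K, r = c.sum fun i a => t ^ i * ι a

/-- Right scalar multiplication of a right `R`-module (i.e. a module over `Rᵐᵒᵖ`). -/
abbrev rsmul {R : Type v} [Ring R] {M : Type w} [AddCommGroup M] [Module Rᵐᵒᵖ M]
    (x : M) (r : R) : M :=
  MulOpposite.op r • x

/-- The set `M.r` is everything, i.e. `x ↦ x.r` is surjective, for every nonzero `r`:
`M` is a divisible right `R`-module. -/
def RDivisible (R : Type v) [Ring R] (M : Type w) [AddCommGroup M] [Module Rᵐᵒᵖ M] : Prop :=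
  ∀ r : R, r ≠ 0 → ∀ y : M, ∃ x : M, rsmul x r = y

/-- A subset `N` of `M` is divisible: `N.r = N` for every nonzero `r ∈ R`. -/
def RDivisibleIn (R : Type v) [Ring R] {M : Type w} [AddCommGroup M] [Module Rᵐᵒᵖ M]
    (N : Set M) : Prop :=
  ∀ r : R, r ≠ 0 → ∀ y ∈ N, ∃ x ∈ N, rsmul x r = y

/-- The torsion subset of a right `R`-module. -/
def torsionSet (R : Type v) [Ring R] (M : Type w) [AddCommGroup M] [Module Rᵐᵒᵖ M] :
    Set M :=
  {z : M | ∃ r : R, r ≠ 0 ∧ rsmul z r = 0}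

/-- `s ∈ R` is separable if it is not divisible by `t`. -/
def SeparablePoly {R : Type v} [Ring R] (t s : R) : Prop :=
  ¬ ∃ q : R, s = t * q

/-- `M = A ⊕ B` as an internal direct sum of subsets. -/
def IsInternalDirectSum {M : Type w} [AddCommGroup M] (A B : Set M) : Prop :=
  ∀ x : M, ∃! p : M × M, p.1 ∈ A ∧ p.2 ∈ B ∧ x = p.1 + p.2

/-- The quotient `R/rR` is a (skew) field: `rR` is a proper two-sided ideal and every
element not in `rR` is invertible modulo `rR`. -/
def QuotByIsDivisionRing (R : Type v) [Ring R] (r : R) : Prop :=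
  (¬ ∃ s : R, 1 = r * s) ∧
  (∀ a s : R, ∃ s' : R, a * (r * s) = r * s') ∧
  (∀ q : R, (¬ ∃ s : R, q = r * s) →
    ∃ q' : R, (∃ s : R, q * q' - 1 = r * s) ∧ (∃ s : R, q' * q - 1 = r * s))

/-! ## Languages -/

/-- The language of right `R`-modules: constant `0`, unary `-` and `·r` (`r ∈ R`),
binary `+`. -/
def modLang (R : Type v) : FirstOrder.Language.{v, 0} :=
  ⟨fun n => match n with
    | 0 => PUnit
    | 1 => Option R
    | 2 => PUnit
    | _ => PEmpty,
   fun _ => PEmpty⟩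

/-- The language of right `R`-modules together with a ternary relation symbol `C`. -/
def cModLang (R : Type v) : FirstOrder.Language.{v, 0} :=
  ⟨(modLang R).Functions,
   fun n => match n with
    | 3 => PUnit
    | _ => PEmpty⟩

/-- The pure language of a `C`-relation: a single ternary relation symbol. -/
def cLang : FirstOrder.Language.{0, 0} :=
  ⟨fun _ => PEmpty,
   fun n => match n with
    | 3 => PUnit
    | _ => PEmpty⟩

/-- The language `L_V = {<, ∞, (·r)_{r ∈ R}}` of `R`-chains. -/
def chainLang (R : Type v) : FirstOrder.Language.{v, 0} :=
  ⟨fun n => match n with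
    | 0 => PUnit
    | 1 => R
    | _ => PEmpty,
   fun n => match n with
    | 2 => PUnit
    | _ => PEmpty⟩

/-- The language `L'_V = L_V ∪ {Rₙ : n ∈ ℕ}` with additional unary predicates `Rₙ`. -/
def chainLang' (R : Type v) : FirstOrder.Language.{v, 0} :=
  ⟨(chainLang R).Functions,
   fun n => match n with
    | 1 => ℕ
    | 2 => PUnit
    | _ => PEmpty⟩

/-! ## Structures -/

/-- Any right `R`-module is a `modLang R`-structure. -/
instance modStructure (R : Type v) [Ring R] (M : Type w) [AddCommGroup M]
    [Module Rᵐᵒᵖ M] : (modLang R).Structure M where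
  funMap {n} f x :=
    match n, f, x with
    | 0, _, _ => 0
    | 1, none, x => -x 0
    | 1, some r, x => rsmul (x 0) r
    | 2, _, x => x 0 + x 1
    | _ + 3, f, _ => PEmpty.elim f
  RelMap {_} r _ := PEmpty.elim r

/-- A subset of `M` closed under the module operations. -/
structure SubmoduleSet (R : Type v) [Ring R] (M : Type w) [AddCommGroup M]
    [Module Rᵐᵒᵖ M] (N : Set M) : Prop where
  zero_mem : (0 : M) ∈ N
  add_mem : ∀ x y : M, x ∈ N → y ∈ N → x + y ∈ N
  neg_mem : ∀ x : M, x ∈ N → -x ∈ N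
  smul_mem : ∀ (r : R) (x : M), x ∈ N → rsmul x r ∈ N

/-- The `modLang R`-structure on a subset closed under the module operations. -/
def setModStructure (R : Type v) [Ring R] (M : Type w) [AddCommGroup M] [Module Rᵐᵒᵖ M]
    (N : Set M) (h : SubmoduleSet R M N) : (modLang R).Structure N where
  funMap {n} f x :=
    match n, f, x with
    | 0, _, _ => ⟨0, h.zero_mem⟩
    | 1, none, x => ⟨-(x 0 : M), h.neg_mem _ (x 0).2⟩
    | 1, some r, x => ⟨rsmul (x 0 : M) r, h.smul_mem r _ (x 0).2⟩
    | 2, _, x => ⟨(x 0 : M) + (x 1 : M), h.add_mem _ _ (x 0).2 (x 1).2⟩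
    | _ + 3, f, _ => PEmpty.elim f
  RelMap {_} r _ := PEmpty.elim r

/-- The `cModLang R`-structure on a right `R`-module endowed with a ternary relation `C`. -/
def cModStructure (R : Type v) [Ring R] (M : Type w) [AddCommGroup M] [Module Rᵐᵒᵖ M]
    (C : M → M → M → Prop) : (cModLang R).Structure M where
  funMap {n} f x :=
    match n, f, x with
    | 0, _, _ => 0
    | 1, none, x => -x 0
    | 1, some r, x => rsmul (x 0) r
    | 2, _, x => x 0 + x 1
    | _ + 3, f, _ => PEmpty.elim f
  RelMap {n} r x :=
    match n, r, x with
    | 3, _, x => C (x 0) (x 1) (x 2)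
    | 0, r, _ => PEmpty.elim r
    | 1, r, _ => PEmpty.elim r
    | 2, r, _ => PEmpty.elim r
    | _ + 4, r, _ => PEmpty.elim r

/-- The `cModLang R`-structure on a subset closed under the module operations, with a
ternary relation `C` restricted from the ambient module. -/
def cModStructureSet (R : Type v) [Ring R] (M : Type w) [AddCommGroup M] [Module Rᵐᵒᵖ M]
    (N : Set M) (h : SubmoduleSet R M N) (C : M → M → M → Prop) :
    (cModLang R).Structure N where
  funMap {n} f x :=
    match n, f, x with
    | 0, _, _ => ⟨0, h.zero_mem⟩
    | 1, none, x => ⟨-(x 0 : M), h.neg_mem _ (x 0).2⟩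
    | 1, some r, x => ⟨rsmul (x 0 : M) r, h.smul_mem r _ (x 0).2⟩
    | 2, _, x => ⟨(x 0 : M) + (x 1 : M), h.add_mem _ _ (x 0).2 (x 1).2⟩
    | _ + 3, f, _ => PEmpty.elim f
  RelMap {n} r x :=
    match n, r, x with
    | 3, _, x => C (x 0) (x 1) (x 2)
    | 0, r, _ => PEmpty.elim r
    | 1, r, _ => PEmpty.elim r
    | 2, r, _ => PEmpty.elim r
    | _ + 4, r, _ => PEmpty.elim r

/-- The `cLang`-structure determined by a ternary relation. -/
def cRelStructure (N : Type w) (C : N → N → N → Prop) : cLang.Structure N where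
  funMap {_} f _ := PEmpty.elim f
  RelMap {n} r x :=
    match n, r, x with
    | 3, _, x => C (x 0) (x 1) (x 2)
    | 0, r, _ => PEmpty.elim r
    | 1, r, _ => PEmpty.elim r
    | 2, r, _ => PEmpty.elim r
    | _ + 4, r, _ => PEmpty.elim r

/-- The `chainLang R`-structure (`L_V`-structure) on a chain `Δ` with maximum `infty`
and action `act` of `R`. -/
def chainStructure (R : Type v) [Ring R] (Δ : Type w) [LinearOrder Δ]
    (infty : Δ) (act : Δ → R → Δ) : (chainLang R).Structure Δ where
  funMap {n} f x :=
    match n, f, x with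
    | 0, _, _ => infty
    | 1, r, x => act (x 0) r
    | _ + 2, f, _ => PEmpty.elim f
  RelMap {n} r x :=
    match n, r, x with
    | 2, _, x => x 0 < x 1
    | 0, r, _ => PEmpty.elim r
    | 1, r, _ => PEmpty.elim r
    | _ + 3, r, _ => PEmpty.elim r

/-- The `chainLang' R`-structure (`L'_V`-structure) on the chain of a valued module:
the unary predicate `Rₙ` holds at `γ` iff `|M_{≥γ}/M_{>γ}| ≥ n`. -/
def chainStructure' (R : Type v) [Ring R] (M : Type w) [AddCommGroup M]
    (Δ : Type x) [LinearOrder Δ] (infty : Δ) (act : Δ → R → Δ) (v : M → Δ) :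
    (chainLang' R).Structure Δ where
  funMap {n} f x :=
    match n, f, x with
    | 0, _, _ => infty
    | 1, r, x => act (x 0) r
    | _ + 2, f, _ => PEmpty.elim f
  RelMap {n} r x :=
    match n, r, x with
    | 1, k, x =>
        ∃ f : Fin k → M, (∀ i, x 0 ≤ v (f i)) ∧ ∀ i j, i ≠ j → v (f i - f j) ≤ x 0
    | 2, _, x => x 0 < x 1
    | 0, r, _ => PEmpty.elim r
    | _ + 3, r, _ => PEmpty.elim r

/-- The `chainLang R`-structure on a subset of a chain closed under the action. -/
def chainStructureOn (R : Type v) [Ring R] (Δ : Type w) [LinearOrder Δ]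
    (infty : Δ) (act : Δ → R → Δ) (S : Set Δ)
    (h0 : infty ∈ S) (hcl : ∀ δ ∈ S, ∀ r : R, act δ r ∈ S) :
    (chainLang R).Structure S where
  funMap {n} f x :=
    match n, f, x with
    | 0, _, _ => ⟨infty, h0⟩
    | 1, r, x => ⟨act (x 0 : Δ) r, hcl _ (x 0).2 r⟩
    | _ + 2, f, _ => PEmpty.elim f
  RelMap {n} r x :=
    match n, r, x with
    | 2, _, x => (x 0 : Δ) < (x 1 : Δ)
    | 0, r, _ => PEmpty.elim r
    | 1, r, _ => PEmpty.elim r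
    | _ + 3, r, _ => PEmpty.elim r

/-! ## Minimality notions -/

/-- A structure is strongly minimal if in every elementarily equivalent structure,
every subset definable with parameters is finite or cofinite. -/
def StronglyMinimal (L : FirstOrder.Language.{u, v}) (M : Type w) [L.Structure M] : Prop :=
  ∀ (N : Type w) [L.Structure N],
    L.ElementarilyEquivalent M N →
      ∀ s : Set N, Set.Definable₁ (univ : Set N) L s → s.Finite ∨ sᶜ.Finite

/-- Strong minimality of a subset of a module, viewed as a right `R`-module in its own
right (for any witness that it is a submodule). -/
def StronglyMinimalSet (R : Type v) [Ring R] {M : Type w} [AddCommGroup M]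
    [Module Rᵐᵒᵖ M] (N : Set M) : Prop :=
  ∀ h : SubmoduleSet R M N,
    letI := setModStructure R M N h
    StronglyMinimal (modLang R) N

/-- A subset is quantifier-free definable, with parameters, using only the ternary
relation `C`. -/
def QFCDefinable {N : Type w} (C : N → N → N → Prop) (s : Set N) : Prop :=
  letI : cLang.Structure N := cRelStructure N C
  ∃ (k : ℕ) (φ : cLang.Formula (Fin k ⊕ Fin 1)) (c : Fin k → N),
    φ.IsQF ∧ s = {a : N | φ.Realize (Sum.elim c fun _ => a)}

/-- A structure in a language `L` with a distinguished ternary relation symbol `c` is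
`C`-minimal if in every elementarily equivalent structure, every subset definable with
parameters is quantifier-free definable using only the relation `C`. -/
def CMinimal (L : FirstOrder.Language.{u, v}) (c : L.Relations 3) (M : Type w) [L.Structure M] :
    Prop :=
  ∀ (N : Type w) [L.Structure N],
    L.ElementarilyEquivalent M N →
      ∀ s : Set N, Set.Definable₁ (univ : Set N) L s →
        QFCDefinable (fun a b d => Structure.RelMap c ![a, b, d]) s

/-- `C`-minimality of a subset of a module closed under the module operations,
with the `C`-relation restricted from the ambient module. -/
def CMinimalSet (R : Type v) [Ring R] (M : Type w) [AddCommGroup M] [Module Rᵐᵒᵖ M]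
    (N : Set M) (C : M → M → M → Prop) : Prop :=
  ∀ h : SubmoduleSet R M N,
    letI := cModStructureSet R M N h C
    CMinimal (cModLang R) PUnit.unit N

/-- A point or an interval in a linear order. -/
def IsIntervalOrPoint {Δ : Type w} [LinearOrder Δ] (s : Set Δ) : Prop :=
  (∃ a, s = {a}) ∨ (∃ a b, s = Ioo a b) ∨ (∃ a b, s = Ico a b) ∨ (∃ a b, s = Ioc a b) ∨
  (∃ a b, s = Icc a b) ∨ (∃ a, s = Ioi a) ∨ (∃ a, s = Ici a) ∨ (∃ a, s = Iio a) ∨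
  (∃ a, s = Iic a) ∨ s = univ ∨ s = ∅

/-- A linearly ordered structure is o-minimal if every subset definable with parameters
is a finite union of points and intervals. -/
def OMinimal (L : FirstOrder.Language.{u, v}) (Δ : Type w) [LinearOrder Δ] [L.Structure Δ] : Prop :=
  ∀ s : Set Δ, Set.Definable₁ (univ : Set Δ) L s →
    ∃ (n : ℕ) (f : Fin n → Set Δ), (∀ i, IsIntervalOrPoint (f i)) ∧ s = ⋃ i, f i

/-- o-minimality of a subset of a chain (closed under the action and containing `∞`),
as an `L_V`-structure. -/
def OMinimalChainOn (R : Type v) [Ring R] (Δ : Type w) [LinearOrder Δ]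
    (infty : Δ) (act : Δ → R → Δ) (S : Set Δ) : Prop :=
  ∀ (h0 : infty ∈ S) (hcl : ∀ δ ∈ S, ∀ r : R, act δ r ∈ S),
    letI := chainStructureOn R Δ infty act S h0 hcl
    OMinimal (chainLang R) S

/-! ## Valued `R`-modules -/

/-- `(M, Δ, infty, act, v)` is a valued right `R`-module over the skew polynomial ring
`R = K[t;φ]` (with `K` acting through `ι`): `Δ` is an `R`-chain with maximum `infty`
and `v` is a surjective valuation compatible with the action. -/
structure IsValuedRMod (K : Type u) [Field K] (φ : K →+* K) (R : Type v) [Ring R]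
    (ι : K →+* R) (t : R) (M : Type w) [AddCommGroup M] [Module Rᵐᵒᵖ M]
    (Δ : Type x) [LinearOrder Δ] (infty : Δ) (act : Δ → R → Δ) (v : M → Δ) : Prop where
  le_infty : ∀ γ : Δ, γ ≤ infty
  actK_strictMono : ∀ a : K, a ≠ 0 → ∀ γ δ : Δ, γ ≠ infty → δ ≠ infty → δ < γ →
    act δ (ι a) < act γ (ι a)
  actK_mul : ∀ a b : K, a ≠ 0 → b ≠ 0 → ∀ γ : Δ, γ ≠ infty →
    act γ (ι (a * b)) = act (act γ (ι a)) (ι b)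
  actK_expansive : ∀ a : K, a ≠ 0 → ∀ γ δ : Δ, γ ≠ infty → δ ≠ infty →
    γ < act γ (ι a) → δ < act δ (ι a)
  actK_add : ∀ a b : K, ∀ γ : Δ, γ ≠ infty →
    min (act γ (ι a)) (act γ (ι b)) ≤ act γ (ι (a + b))
  actK_sub : ∀ a b : K, ∀ γ : Δ, γ ≠ infty →
    min (act γ (ι a)) (act γ (ι b)) ≤ act γ (ι (a - b))
  act_zero : ∀ γ : Δ, act γ 0 = infty
  act_one : ∀ γ : Δ, act γ 1 = γ
  actK_infty : ∀ b : K, b ≠ 0 → act infty (ι b) = infty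
  act_t_strictMono : ∀ γ δ : Δ, γ ≠ infty → δ ≠ infty → δ < γ → act δ t < act γ t
  act_t_infty : act infty t = infty
  act_t_ne_infty : ∀ γ : Δ, γ ≠ infty → act γ t ≠ infty
  act_ta : ∀ (a : K) (γ : Δ), act γ (t * ι a) = act (act γ t) (ι a)
  act_tpow : ∀ (n : ℕ) (a : K) (γ : Δ),
    act γ (t ^ (n + 1) * ι a) = act (act γ (t ^ n)) (t * ι a)
  act_min : ∀ (c : ℕ →₀ K) (hc : c.support.Nonempty), ∀ γ : Δ, γ ≠ infty →
    act γ (c.sum fun i a => t ^ i * ι a) = c.support.inf' hc fun i => act γ (t ^ i * ι (c i))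
  act_monomial_lt : ∀ (m n : ℕ) (a b : K), a ≠ 0 → b ≠ 0 → n < m → ∀ γ : Δ, γ ≠ infty →
    act γ (t ^ m * ι a) ≤ act γ (t ^ n * ι b) →
    ∀ δ : Δ, δ < γ → act δ (t ^ m * ι a) < act δ (t ^ n * ι b)
  v_surjective : Function.Surjective v
  v_eq_infty_iff : ∀ z : M, v z = infty ↔ z = 0
  v_sub : ∀ z y : M, min (v z) (v y) ≤ v (z - y)
  v_smulK : ∀ (z : M) (a : K), v (rsmul z (ι a)) = act (v z) (ι a)
  v_smul_t : ∀ z : M, v (rsmul z t) = act (v z) t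

/-- The canonical `C`-relation of a valued module (additive convention):
`C(x,y,z) ⟺ v(x−y) = v(x−z) < v(y−z)`. -/
def Crel {M : Type w} [AddCommGroup M] {Δ : Type x} [LinearOrder Δ] (v : M → Δ)
    (a b c : M) : Prop :=
  v (a - b) = v (a - c) ∧ v (a - c) < v (b - c)

/-- `(M,v)` is trivially valued: `v` takes at most two values. -/
def TriviallyValued {M : Type w} [AddCommGroup M] {Δ : Type x} (v : M → Δ) : Prop :=
  ∀ a b : M, a ≠ 0 → b ≠ 0 → v a = v b

/-- `(M,v)` is `K`-trivially valued: `v(x.a) = v(x)` for every `a ∈ K^×`. -/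
def KTriviallyValued {K : Type u} [Field K] {R : Type v} [Ring R] (ι : K →+* R)
    {M : Type w} [AddCommGroup M] [Module Rᵐᵒᵖ M] {Δ : Type x} (v : M → Δ) : Prop :=
  ∀ (z : M) (a : K), a ≠ 0 → v (rsmul z (ι a)) = v z

/-- `M_{>θ} = {x | v(x.t) > v(x)}`. -/
def gtTheta {R : Type v} [Ring R] (t : R) {M : Type w} [AddCommGroup M] [Module Rᵐᵒᵖ M]
    {Δ : Type x} [LinearOrder Δ] (v : M → Δ) : Set M :=
  {z : M | v z < v (rsmul z t)}

/-- `M_{≥θ} = {x | v(x.t) ≥ v(x)}`. -/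
def geTheta {R : Type v} [Ring R] (t : R) {M : Type w} [AddCommGroup M] [Module Rᵐᵒᵖ M]
    {Δ : Type x} [LinearOrder Δ] (v : M → Δ) : Set M :=
  {z : M | v z ≤ v (rsmul z t)}

/-- `(M,v)` is henselian: for every separable `s`, `x ↦ x.s` is a bijection of `M_{>θ}`. -/
def HenselianVM {R : Type v} [Ring R] (t : R) {M : Type w} [AddCommGroup M]
    [Module Rᵐᵒᵖ M] {Δ : Type x} [LinearOrder Δ] (v : M → Δ) : Prop :=
  ∀ s : R, SeparablePoly t s →
    Set.BijOn (fun z : M => rsmul z s) (gtTheta t v) (gtTheta t v)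

/-- `B` is a subset of `S` of finite index (finitely many additive translates of `B`
cover `S`). -/
def HasFiniteIndexIn {M : Type w} [AddCommGroup M] (B S : Set M) : Prop :=
  B ⊆ S ∧ ∃ (n : ℕ) (a : Fin n → M), S ⊆ ⋃ i, (fun b => b + a i) '' B

/-- `S` contains a ball (centered at `0`, of radius `≠ ∞`) of finite index in `S`. -/
def ContainsBallFiniteIndex {M : Type w} [AddCommGroup M] {Δ : Type x} [LinearOrder Δ]
    (v : M → Δ) (infty : Δ) (S : Set M) : Prop :=
  ∃ γ : Δ, γ ≠ infty ∧
    (HasFiniteIndexIn {z : M | γ ≤ v z} S ∨ HasFiniteIndexIn {z : M | γ < v z} S)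

/-- `(M,v)` is residually divisible and affinely maximal: for every nonzero `r ∈ R` and
`z ∈ M` there is `y` with `y.r = z` and `v(y.r) = v(y)·r`. -/
def ResDivAffMax {R : Type v} [Ring R] {M : Type w} [AddCommGroup M] [Module Rᵐᵒᵖ M]
    {Δ : Type x} (act : Δ → R → Δ) (v : M → Δ) : Prop :=
  ∀ r : R, r ≠ 0 → ∀ z : M, ∃ y : M, rsmul y r = z ∧ v (rsmul y r) = act (v y) r

/-! ## Valued fields as valued modules -/

/-- The valuation ring of a (multiplicative Krull) valuation. -/
def ValRing {F : Type u} {Γ₀ : Type v} [Field F] [LinearOrderedCommGroupWithZero Γ₀]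
    (v : Valuation F Γ₀) : Set F :=
  {z : F | v z ≤ 1}

/-- The canonical `C`-relation of a (multiplicatively written) valued field:
in additive notation, `C(x,y,z) ⟺ v(x−y) = v(x−z) < v(y−z)`. -/
def valC {F : Type u} {Γ₀ : Type v} [Field F] [LinearOrderedCommGroupWithZero Γ₀]
    (v : Valuation F Γ₀) (a b c : F) : Prop :=
  v (a - b) = v (a - c) ∧ v (b - c) < v (a - c)

/-- A valuation is henselian (Newton–Hensel approximation property on the valuation
ring). -/
def HenselianValuation {F : Type u} {Γ₀ : Type v} [Field F]
    [LinearOrderedCommGroupWithZero Γ₀] (v : Valuation F Γ₀) : Prop :=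
  ∀ P : Polynomial F, (∀ i, v (P.coeff i) ≤ 1) → ∀ a : F, v a ≤ 1 →
    v (P.eval a) < v (P.derivative.eval a) ^ 2 →
    ∃ b : F, v b ≤ 1 ∧ P.eval b = 0 ∧ v (b - a) < v (P.derivative.eval a)

/-- The residue field of `v` is finite. -/
def FiniteResidueField {F : Type u} {Γ₀ : Type v} [Field F]
    [LinearOrderedCommGroupWithZero Γ₀] (v : Valuation F Γ₀) : Prop :=
  ∃ n : ℕ, ∀ z : Fin (n + 1) → F, (∀ i, v (z i) ≤ 1) →
    ∃ i j, i ≠ j ∧ v (z i - z j) < 1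

/-- The residue field of `v` is `p`-closed: every nonzero additive polynomial
`∑ aᵢ X^{pⁱ}` over the residue field is surjective. -/
def PClosedResidue (p : ℕ) {F : Type u} {Γ₀ : Type v} [Field F]
    [LinearOrderedCommGroupWithZero Γ₀] (v : Valuation F Γ₀) : Prop :=
  ∀ (d : ℕ) (a : Fin (d + 1) → F), (∀ i, v (a i) ≤ 1) → (∃ i, v (a i) = 1) →
    ∀ z : F, v z ≤ 1 → ∃ y : F, v y ≤ 1 ∧ v ((∑ i, a i * y ^ p ^ (i : ℕ)) - z) < 1

/-- A field `k` of characteristic `p` is `p`-closed: every nonzero additive polynomial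
with coefficients in `k` is surjective on `k`. -/
def PClosedField (p : ℕ) (k : Type u) [Field k] : Prop :=
  ∀ (d : ℕ) (a : Fin (d + 1) → k), (∃ i, a i ≠ 0) →
    Function.Surjective fun z : k => ∑ i, a i * z ^ p ^ (i : ℕ)

/-- The value group of `v` is divisible. -/
def DivisibleValueGroup {F : Type u} {Γ₀ : Type v} [Field F]
    [LinearOrderedCommGroupWithZero Γ₀] (v : Valuation F Γ₀) : Prop :=
  ∀ z : F, z ≠ 0 → ∀ n : ℕ, 0 < n → ∃ y : F, y ≠ 0 ∧ v y ^ n = v z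

/-- `(F,v)` is algebraically maximal: it has no proper immediate algebraic extension. -/
def AlgebraicallyMaximal {F : Type u} {Γ₀ : Type v} [Field F]
    [LinearOrderedCommGroupWithZero Γ₀] (v : Valuation F Γ₀) : Prop :=
  ∀ (L : Type u) [Field L] [Algebra F L], Algebra.IsAlgebraic F L →
    ∀ w : Valuation L Γ₀,
      (∀ z : F, w (algebraMap F L z) = v z) →
      (∀ z : L, ∃ y : F, w z = v y) →
      (∀ z : L, w z ≤ 1 → ∃ y : F, w (z - algebraMap F L y) < 1) →
      Function.Surjective (algebraMap F L)

/-! ## Puiseux series -/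

/-- The set of Puiseux series over `k`, inside the Hahn series field `k((ℚ))`:
series whose support is contained in `(1/n)ℤ` for some `n ≥ 1`. -/
def PuiseuxSet (k : Type u) [Field k] : Set (HahnSeries ℚ k) :=
  {f | ∃ n : ℕ, 0 < n ∧ ∀ q ∈ f.support, ∃ m : ℤ, q = (m : ℚ) / (n : ℚ)}

/-- The ring of Puiseux series over `k`: the valuation ring of the field of Puiseux
series. -/
def PuiseuxValRing (k : Type u) [Field k] : Set (HahnSeries ℚ k) :=
  {f | f ∈ PuiseuxSet k ∧ ∀ q ∈ f.support, 0 ≤ q}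

/-- The canonical `C`-relation on Hahn series over `ℚ`, induced by the order valuation
(additive convention). -/
def hahnC {k : Type u} [Field k] (a b c : HahnSeries ℚ k) : Prop :=
  (a - b).orderTop = (a - c).orderTop ∧ (a - c).orderTop < (b - c).orderTop

/-! Write the separable `s` as `a + t q` with `a ∈ K^×`. On `M_{>θ}` the term `x.a` dominates
`x.(t q)`, so `x ↦ x.s` preserves `v` there (hence is injective), and `x.a⁻¹` is an approximate
preimage of `x`: `v(x - (x.a⁻¹).s) > v(x)`. If `y ∈ M_{>θ}` had no preimage, the coset
`T = y + (M_{>θ} ∪ {0}).s` would be a definable set without an element of maximal value. By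
`C`-minimality, membership in `T` depends only on the values `v(· - cᵢ)` for finitely many `cᵢ`;
so for `w ∈ T` with `v(w) ≠ v(cᵢ)` for all `i`, every element of value `v(w)` lies in `T`,
among them `(w.a⁻¹).s`, which forces `y` into the image after all. -/

theorem Set.Finite.exists_mem_apply_notMem {α β : Type*} [LinearOrder β] {F : Set β}
    (hF : F.Finite) {f : α → β} {S : Set α} (hne : S.Nonempty)
    (hS : ∀ a ∈ S, ∃ b ∈ S, f a < f b) : ∃ a ∈ S, f a ∉ F := by
  by_contra! hSF
  obtain ⟨_, ⟨a, ha, rfl⟩, hmax⟩ :=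
    Set.exists_max_image (f '' S) id (hF.subset (Set.image_subset_iff.2 hSF)) (hne.image f)
  obtain ⟨b, hb, hab⟩ := hS a ha
  exact (hmax _ ⟨b, hb, rfl⟩).not_gt hab

namespace FirstOrder.Language

variable {L : Language} [L.IsRelational] {N : Type w} [L.Structure N]

theorem Term.exists_eq_var {β : Type*} (τ : L.Term β) : ∃ u, τ = Term.var u := by
  cases τ with
  | var u => exact ⟨u, rfl⟩
  | func f _ => exact isEmptyElim f

theorem BoundedFormula.realize_iff_of_isQF {Γ : Type*} (d : N → N → Γ)
    (hrel : ∀ {l} (r : L.Relations l) (x y : Fin l → N),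
      (∀ i j, d (x i) (x j) = d (y i) (y j)) → (Structure.RelMap r x ↔ Structure.RelMap r y))
    (heq : ∀ a b a' b' : N, d a b = d a' b' → (a = b ↔ a' = b'))
    {α : Type*} {n : ℕ} {φ : L.BoundedFormula α n} (hφ : φ.IsQF) {f g : α → N}
    {xs ys : Fin n → N}
    (h : ∀ i j, d (Sum.elim f xs i) (Sum.elim f xs j) = d (Sum.elim g ys i) (Sum.elim g ys j)) :
    φ.Realize f xs ↔ φ.Realize g ys := by
  induction hφ with
  | falsum => exact Iff.rfl
  | of_isAtomic hA =>
    cases hA with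
    | equal t₁ t₂ =>
      obtain ⟨u₁, rfl⟩ := t₁.exists_eq_var
      obtain ⟨u₂, rfl⟩ := t₂.exists_eq_var
      exact heq _ _ _ _ (h u₁ u₂)
    | rel r ts =>
      choose u hu using fun i => (ts i).exists_eq_var
      simp only [BoundedFormula.realize_rel, hu, Term.realize_var]
      exact hrel r _ _ fun i j => h (u i) (u j)
  | imp _ _ ih₁ ih₂ => simp only [BoundedFormula.realize_imp, ih₁, ih₂]

end FirstOrder.Language

instance : cLang.IsRelational := fun _ => inferInstanceAs (IsEmpty PEmpty)

section AddValuation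

variable {M : Type w} [AddCommGroup M] {Δ : Type x} [LinearOrder Δ]

structure IsAddValuation (v : M → Δ) (infty : Δ) : Prop where
  le_infty : ∀ z : M, v z ≤ infty
  eq_infty_iff : ∀ z : M, v z = infty ↔ z = 0
  min_le_sub : ∀ z y : M, min (v z) (v y) ≤ v (z - y)

namespace IsAddValuation

variable {v : M → Δ} {infty : Δ}

theorem map_zero (hv : IsAddValuation v infty) : v 0 = infty :=
  (hv.eq_infty_iff 0).2 rfl

theorem le_map_zero (hv : IsAddValuation v infty) (z : M) : v z ≤ v 0 :=
  hv.map_zero ▸ hv.le_infty z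

theorem map_neg (hv : IsAddValuation v infty) (z : M) : v (-z) = v z := by
  have key : ∀ y : M, v y ≤ v (-y) := fun y => by
    simpa [min_eq_right (hv.le_map_zero y)] using hv.min_le_sub 0 y
  exact le_antisymm (by simpa using key (-z)) (key z)

theorem map_sub_comm (hv : IsAddValuation v infty) (z y : M) : v (z - y) = v (y - z) := by
  rw [← neg_sub, hv.map_neg]

theorem min_le_add (hv : IsAddValuation v infty) (z y : M) : min (v z) (v y) ≤ v (z + y) := by
  simpa [hv.map_neg] using hv.min_le_sub z (-y)

theorem map_sub_eq_of_lt (hv : IsAddValuation v infty) {z y : M} (h : v z < v y) :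
    v (z - y) = v z := by
  refine le_antisymm (not_lt.1 fun hlt => ?_) (by simpa [min_eq_left h.le] using hv.min_le_sub z y)
  simpa using (lt_min hlt h).trans_le (hv.min_le_add (z - y) y)

theorem map_add_eq_of_lt (hv : IsAddValuation v infty) {z y : M} (h : v z < v y) :
    v (z + y) = v z := by
  simpa using hv.map_sub_eq_of_lt (y := -y) (by rwa [hv.map_neg])

theorem map_sub_eq_min (hv : IsAddValuation v infty) {z y : M} (h : v z ≠ v y) :
    v (z - y) = min (v z) (v y) := by
  rcases h.lt_or_gt with h | h
  · rw [hv.map_sub_eq_of_lt h, min_eq_left h.le]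
  · rw [hv.map_sub_comm, hv.map_sub_eq_of_lt h, min_eq_right h.le]

theorem exists_forall_mem_iff_of_qfcDefinable (hv : IsAddValuation v infty) {T : Set M}
    (hT : QFCDefinable (Crel v) T) :
    ∃ (k : ℕ) (c : Fin k → M), ∀ a b, (∀ i, v (a - c i) = v (b - c i)) → (a ∈ T ↔ b ∈ T) := by
  let := cRelStructure M (Crel v)
  obtain ⟨k, φ, c, hφ, rfl⟩ := hT
  refine ⟨k, c, fun a b hab =>
    BoundedFormula.realize_iff_of_isQF (fun a b => v (a - b)) ?_ ?_ hφ ?_⟩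
  · intro l r x y hxy
    match l, r with
    | 3, _ =>
      change Crel v (x 0) (x 1) (x 2) ↔ Crel v (y 0) (y 1) (y 2)
      rw [Crel, Crel, hxy 0 1, hxy 0 2, hxy 1 2]
  · intro a b a' b' h
    rw [← sub_eq_zero, ← hv.eq_infty_iff, h, hv.eq_infty_iff, sub_eq_zero]
  · rintro ((i | _) | ⟨_, ⟨⟩⟩) ((j | _) | ⟨_, ⟨⟩⟩)
    · rfl
    · simpa [hv.map_sub_comm (c i)] using hab i
    · simpa using hab j
    · simp

theorem exists_forall_map_eq_mem_of_qfcDefinable (hv : IsAddValuation v infty) {T : Set M}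
    (hT : QFCDefinable (Crel v) T) (hne : T.Nonempty) (hmax : ∀ w ∈ T, ∃ w' ∈ T, v w < v w') :
    ∃ w ∈ T, ∀ x, v x = v w → x ∈ T := by
  obtain ⟨k, c, hc⟩ := hv.exists_forall_mem_iff_of_qfcDefinable hT
  obtain ⟨w, hw, hwc⟩ := (Set.finite_range fun i => v (c i)).exists_mem_apply_notMem hne hmax
  refine ⟨w, hw, fun x hx => (hc x w fun i => ?_).2 hw⟩
  have hne : v w ≠ v (c i) := fun h => hwc ⟨i, h.symm⟩
  rw [hv.map_sub_eq_min (hx ▸ hne), hv.map_sub_eq_min hne, hx]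

theorem mem_of_qfcDefinable_coset (hv : IsAddValuation v infty) {H : AddSubgroup M} {y : M}
    (hT : QFCDefinable (Crel v) {a | a - y ∈ H})
    (happrox : ∀ w ≠ 0, w - y ∈ H → ∃ h ∈ H, v w < v (w - h)) : y ∈ H := by
  by_contra hy
  have hT0 : ∀ w, w - y ∈ H → w ≠ 0 := by
    rintro w hw rfl
    exact hy (by simpa using H.neg_mem hw)
  obtain ⟨w, hw, hsphere⟩ := hv.exists_forall_map_eq_mem_of_qfcDefinable hT ⟨y, by simp⟩
    fun w hw => by
      obtain ⟨h, hh, hlt⟩ := happrox w (hT0 w hw) hw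
      exact ⟨w - h, by simpa [sub_right_comm] using H.sub_mem hw hh, hlt⟩
  obtain ⟨h, hh, hlt⟩ := happrox w (hT0 w hw) hw
  have hvh : v h = v w := by simpa using hv.map_sub_eq_of_lt hlt
  exact hy (by simpa using H.sub_mem hh (hsphere h hvh))

end IsAddValuation

end AddValuation

section Definability

variable {R : Type v} [Ring R] {M : Type w} [AddCommGroup M] [Module Rᵐᵒᵖ M]

theorem definable₁_add_rsmul (C : M → M → M → Prop) (t s : R) (y : M) :
    letI := cModStructure R M C
    Set.Definable₁ (univ : Set M) (cModLang R)
      {a : M | ∃ z : M, (z = 0 ∨ C z (rsmul z t) 0) ∧ a = y + rsmul z s} := by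
  let := cModStructure R M C
  rw [Set.Definable₁, Set.definable_iff_exists_formula_sum]
  let L := cModLang R
  let zero : L.Term (((univ : Set M) ⊕ Fin 1) ⊕ Fin 1) := Term.func (l := 0) PUnit.unit ![]
  let z : L.Term (((univ : Set M) ⊕ Fin 1) ⊕ Fin 1) := Term.var (Sum.inr 0)
  let a : L.Term (((univ : Set M) ⊕ Fin 1) ⊕ Fin 1) := Term.var (Sum.inl (Sum.inr 0))
  let y' : L.Term (((univ : Set M) ⊕ Fin 1) ⊕ Fin 1) :=
    Term.var (Sum.inl (Sum.inl ⟨y, trivial⟩))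
  let smul (r : R) (τ : L.Term (((univ : Set M) ⊕ Fin 1) ⊕ Fin 1)) :=
    Term.func (l := 1) (some r) ![τ]
  refine ⟨BoundedFormula.ex
    ((z.bdEqual zero ⊔ Relations.boundedFormula (n := 3) PUnit.unit ![z, smul t z, zero]) ⊓
      a.bdEqual (Term.func (l := 2) PUnit.unit ![y', smul s z])), ?_⟩
  ext x
  simp only [Set.mem_ofPred_eq, Formula.Realize, BoundedFormula.realize_ex,
    BoundedFormula.realize_inf, BoundedFormula.realize_sup, BoundedFormula.realize_bdEqual]
  exact Iff.rfl

end Definability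

section ValuedRMod

variable {K : Type u} [Field K] {φ : K →+* K} {R : Type v} [Ring R] {ι : K →+* R} {t : R}
  {M : Type w} [AddCommGroup M] [Module Rᵐᵒᵖ M] {Δ : Type x} [LinearOrder Δ] {infty : Δ}
  {act : Δ → R → Δ} {v : M → Δ} {a : K}

theorem rsmul_add_right (z : M) (r r' : R) : rsmul z (r + r') = rsmul z r + rsmul z r' := by
  simp only [rsmul, MulOpposite.op_add, add_smul]

theorem rsmul_mul (z : M) (r r' : R) : rsmul z (r * r') = rsmul (rsmul z r) r' := by
  simp only [rsmul, MulOpposite.op_mul, mul_smul]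

theorem IsSkewPolyRing.exists_eq_add_mul (hR : IsSkewPolyRing K φ R ι t) (s : R) :
    ∃ (a : K) (q : R), s = ι a + t * q := by
  obtain ⟨c, hc, -⟩ := hR.unique_rep s
  let S := insert 0 c.support
  refine ⟨c 0, ∑ i ∈ S.erase 0, t ^ (i - 1) * ι (c i), ?_⟩
  rw [hc, Finsupp.sum_of_support_subset c (Finset.subset_insert 0 _) _ (by simp),
    ← Finset.add_sum_erase S _ (Finset.mem_insert_self 0 _), Finset.mul_sum, pow_zero, one_mul]
  refine congrArg _ (Finset.sum_congr rfl fun i hi => ?_)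
  rw [← mul_assoc, mul_pow_sub_one (Finset.ne_of_mem_erase hi)]

theorem IsSkewPolyRing.exists_eq_add_mul_of_separable (hR : IsSkewPolyRing K φ R ι t) {s : R}
    (hs : SeparablePoly t s) : ∃ a : K, a ≠ 0 ∧ ∃ q : R, s = ι a + t * q := by
  obtain ⟨a, q, rfl⟩ := hR.exists_eq_add_mul s
  refine ⟨a, fun ha => hs ⟨q, ?_⟩, q, rfl⟩
  rw [ha, map_zero, zero_add]

namespace IsValuedRMod

theorem isAddValuation (hV : IsValuedRMod K φ R ι t M Δ infty act v) : IsAddValuation v infty :=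
  ⟨fun _ => hV.le_infty _, hV.v_eq_infty_iff, hV.v_sub⟩

theorem mem_gtTheta_iff (hV : IsValuedRMod K φ R ι t M Δ infty act v) {z : M} :
    z ∈ gtTheta t v ↔ v z < act (v z) t := by
  rw [gtTheta, Set.mem_ofPred_eq, hV.v_smul_t]

theorem ne_zero_of_mem_gtTheta (hV : IsValuedRMod K φ R ι t M Δ infty act v) {z : M}
    (hz : z ∈ gtTheta t v) : z ≠ 0 := by
  rintro rfl
  rw [hV.mem_gtTheta_iff, hV.isAddValuation.map_zero, hV.act_t_infty] at hz
  exact hz.false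

theorem lt_act_of_le (hV : IsValuedRMod K φ R ι t M Δ infty act v) {γ δ : Δ}
    (hγ : γ < act γ t) (hγδ : γ ≤ δ) (hδ : δ ≠ infty) : δ < act δ t := by
  rcases hγδ.lt_or_eq with hlt | rfl
  · by_contra! hle
    have hmono := hV.act_monomial_lt 1 0 1 1 one_ne_zero one_ne_zero zero_lt_one δ hδ
      (by simpa [hV.act_one] using hle) γ hlt
    simp only [pow_one, map_one, mul_one, pow_zero, hV.act_one] at hmono
    exact hmono.not_gt hγ
  · exact hγ

theorem mem_gtTheta_of_le (hV : IsValuedRMod K φ R ι t M Δ infty act v) {z y : M}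
    (hz : z ∈ gtTheta t v) (hzy : v z ≤ v y) (hy : y ≠ 0) : y ∈ gtTheta t v :=
  hV.mem_gtTheta_iff.2 <| hV.lt_act_of_le (hV.mem_gtTheta_iff.1 hz) hzy
    fun h => hy ((hV.v_eq_infty_iff y).1 h)

theorem rsmul_t_mem_gtTheta (hV : IsValuedRMod K φ R ι t M Δ infty act v) {z : M}
    (hz : z ∈ gtTheta t v) : rsmul z t ∈ gtTheta t v := by
  have hz0 : v z ≠ infty := fun h => hV.ne_zero_of_mem_gtTheta hz ((hV.v_eq_infty_iff z).1 h)
  rw [hV.mem_gtTheta_iff, hV.v_smul_t]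
  exact hV.act_t_strictMono _ _ (hV.act_t_ne_infty _ hz0) hz0 (hV.mem_gtTheta_iff.1 hz)

def gtThetaAddSubgroup (hV : IsValuedRMod K φ R ι t M Δ infty act v) : AddSubgroup M where
  carrier := {z | z = 0 ∨ z ∈ gtTheta t v}
  zero_mem' := Or.inl rfl
  add_mem' := by
    rintro z y (rfl | hz) (rfl | hy)
    · exact Or.inl (add_zero 0)
    · simpa using Or.inr hy
    · simpa using Or.inr hz
    · by_cases hzy : z + y = 0
      · exact Or.inl hzy
      refine Or.inr ?_
      have hle := hV.isAddValuation.min_le_add z y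
      rcases min_choice (v z) (v y) with h | h <;> rw [h] at hle
      · exact hV.mem_gtTheta_of_le hz hle hzy
      · exact hV.mem_gtTheta_of_le hy hle hzy
  neg_mem' := by
    rintro z (rfl | hz)
    · exact Or.inl neg_zero
    · refine Or.inr ?_
      simpa [gtTheta, rsmul, hV.isAddValuation.map_neg] using hz

theorem crel_rsmul_t_zero_iff (hV : IsValuedRMod K φ R ι t M Δ infty act v) (z : M) :
    Crel v z (rsmul z t) 0 ↔ z ∈ gtTheta t v := by
  simp only [Crel, sub_zero, gtTheta, Set.mem_ofPred_eq, and_iff_right_iff_imp]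
  exact hV.isAddValuation.map_sub_eq_of_lt

theorem map_le_map_rsmul_pow (hV : IsValuedRMod K φ R ι t M Δ infty act v) {z : M}
    (hz : z ∈ gtTheta t v) (n : ℕ) : v z ≤ v (rsmul z (t ^ n)) := by
  induction n generalizing z with
  | zero => simp [rsmul]
  | succ n ih =>
    rw [pow_succ', rsmul_mul]
    exact (le_of_lt hz).trans (ih (hV.rsmul_t_mem_gtTheta hz))

end IsValuedRMod

namespace KTriviallyValued

theorem le_map_rsmul (hK : KTriviallyValued ι v) (hV : IsValuedRMod K φ R ι t M Δ infty act v)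
    (z : M) (a : K) : v z ≤ v (rsmul z (ι a)) := by
  rcases eq_or_ne a 0 with rfl | ha
  · simpa [rsmul, hV.isAddValuation.map_zero] using hV.le_infty (v z)
  · exact (hK z a ha).ge

theorem rsmul_mem_gtTheta (hK : KTriviallyValued ι v)
    (hV : IsValuedRMod K φ R ι t M Δ infty act v) {z : M} (hz : z ∈ gtTheta t v) {a : K}
    (ha : a ≠ 0) : rsmul z (ι a) ∈ gtTheta t v := by
  rwa [hV.mem_gtTheta_iff, hK z a ha, ← hV.mem_gtTheta_iff]

theorem map_le_map_rsmul (hR : IsSkewPolyRing K φ R ι t) (hK : KTriviallyValued ι v)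
    (hV : IsValuedRMod K φ R ι t M Δ infty act v) {z : M} (hz : z ∈ gtTheta t v) (r : R) :
    v z ≤ v (rsmul z r) := by
  obtain ⟨c, rfl, -⟩ := hR.unique_rep r
  have hsum : rsmul z (c.sum fun i a => t ^ i * ι a) =
      ∑ i ∈ c.support, rsmul (rsmul z (t ^ i)) (ι (c i)) := by
    simp only [rsmul, Finsupp.sum, Finset.op_sum, Finset.sum_smul, MulOpposite.op_mul,
      mul_smul]
  rw [hsum]
  refine Finset.sum_induction _ (fun m => v z ≤ v m)
    (fun m m' hm hm' => (le_min hm hm').trans (hV.isAddValuation.min_le_add m m'))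
    (hV.isAddValuation.le_map_zero z) fun i _ => ?_
  exact (hV.map_le_map_rsmul_pow hz i).trans (hK.le_map_rsmul hV _ _)

end KTriviallyValued

theorem rsmul_add_mul (z : M) (a : K) (q : R) :
    rsmul z (ι a + t * q) = rsmul z (ι a) + rsmul (rsmul z t) q := by
  rw [rsmul_add_right, rsmul_mul]

theorem map_rsmul_add_mul (hR : IsSkewPolyRing K φ R ι t) (hK : KTriviallyValued ι v)
    (hV : IsValuedRMod K φ R ι t M Δ infty act v) (ha : a ≠ 0) (q : R) {z : M}
    (hz : z ∈ gtTheta t v) : v (rsmul z (ι a + t * q)) = v z := by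
  have hlt : v (rsmul z (ι a)) < v (rsmul (rsmul z t) q) := by
    rw [hK z a ha]
    exact lt_of_lt_of_le hz (hK.map_le_map_rsmul hR hV (hV.rsmul_t_mem_gtTheta hz) q)
  rw [rsmul_add_mul, hV.isAddValuation.map_add_eq_of_lt hlt, hK z a ha]

theorem lt_map_sub_rsmul_add_mul (hR : IsSkewPolyRing K φ R ι t) (hK : KTriviallyValued ι v)
    (hV : IsValuedRMod K φ R ι t M Δ infty act v) (ha : a ≠ 0) (q : R) {z : M}
    (hz : z ∈ gtTheta t v) : v z < v (z - rsmul (rsmul z (ι a⁻¹)) (ι a + t * q)) := by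
  have hvz : v (rsmul z (ι a⁻¹)) = v z := hK z _ (inv_ne_zero ha)
  have hz' := hK.rsmul_mem_gtTheta hV hz (inv_ne_zero ha)
  rw [rsmul_add_mul, ← rsmul_mul, ← map_mul, inv_mul_cancel₀ ha, map_one, rsmul,
    MulOpposite.op_one, one_smul, sub_add_cancel_left, hV.isAddValuation.map_neg, ← hvz]
  exact lt_of_lt_of_le hz' (hK.map_le_map_rsmul hR hV (hV.rsmul_t_mem_gtTheta hz') q)

theorem mapsTo_rsmul_add_mul (hR : IsSkewPolyRing K φ R ι t) (hK : KTriviallyValued ι v)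
    (hV : IsValuedRMod K φ R ι t M Δ infty act v) (ha : a ≠ 0) (q : R) :
    Set.MapsTo (fun z : M => rsmul z (ι a + t * q)) (gtTheta t v) (gtTheta t v) := fun z hz => by
  rwa [hV.mem_gtTheta_iff, map_rsmul_add_mul hR hK hV ha q hz, ← hV.mem_gtTheta_iff]

theorem injOn_rsmul_add_mul (hR : IsSkewPolyRing K φ R ι t) (hK : KTriviallyValued ι v)
    (hV : IsValuedRMod K φ R ι t M Δ infty act v) (ha : a ≠ 0) (q : R) :
    Set.InjOn (fun z : M => rsmul z (ι a + t * q)) (gtTheta t v) := by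
  intro x hx y hy hxy
  by_contra hne
  have hd : x - y ∈ gtTheta t v :=
    (hV.gtThetaAddSubgroup.sub_mem (Or.inr hx) (Or.inr hy)).resolve_left (sub_ne_zero.2 hne)
  have hvd := map_rsmul_add_mul hR hK hV ha q hd
  rw [rsmul, smul_sub, sub_eq_zero.2 hxy, hV.isAddValuation.map_zero, eq_comm,
    hV.v_eq_infty_iff] at hvd
  exact hne (sub_eq_zero.1 hvd)

theorem surjOn_rsmul_add_mul (hR : IsSkewPolyRing K φ R ι t) (hK : KTriviallyValued ι v)
    (hV : IsValuedRMod K φ R ι t M Δ infty act v)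
    (hcmin : @CMinimal (cModLang R) PUnit.unit M (cModStructure R M (Crel v)))
    (ha : a ≠ 0) (q : R) :
    Set.SurjOn (fun z : M => rsmul z (ι a + t * q)) (gtTheta t v) (gtTheta t v) := by
  intro y hy
  set s := ι a + t * q
  set G := hV.gtThetaAddSubgroup
  set H := G.map (DistribSMul.toAddMonoidHom M (MulOpposite.op s))
  have hGs : ∀ z ∈ G, rsmul z s ∈ G := by
    rintro z (rfl | hz)
    · exact Or.inl (smul_zero _)
    · exact Or.inr (mapsTo_rsmul_add_mul hR hK hV ha q hz)
  have hT : QFCDefinable (Crel v) {b | b - y ∈ H} := by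
    have hset : {b | b - y ∈ H} =
        {b | ∃ z, (z = 0 ∨ Crel v z (rsmul z t) 0) ∧ b = y + rsmul z s} := by
      ext b
      simp only [H, AddSubgroup.mem_map, hV.crel_rsmul_t_zero_iff]
      refine exists_congr fun z => and_congr Iff.rfl ?_
      rw [DistribSMul.toAddMonoidHom_apply, eq_sub_iff_add_eq, add_comm, eq_comm]
    rw [hset]
    let := cModStructure R M (Crel v)
    exact hcmin M rfl _ (definable₁_add_rsmul _ t s y)
  have happrox : ∀ w ≠ 0, w - y ∈ H → ∃ h ∈ H, v w < v (w - h) := by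
    intro w hw0 hwy
    obtain ⟨z, hz, hzw⟩ := AddSubgroup.mem_map.1 hwy
    have hw : w ∈ gtTheta t v := by
      have hwG := G.add_mem (Or.inr hy) (hGs z hz)
      rw [show rsmul z s = w - y from hzw, add_sub_cancel] at hwG
      exact hwG.resolve_left hw0
    exact ⟨rsmul (rsmul w (ι a⁻¹)) s, AddSubgroup.mem_map.2
      ⟨_, Or.inr (hK.rsmul_mem_gtTheta hV hw (inv_ne_zero ha)), rfl⟩,
      lt_map_sub_rsmul_add_mul hR hK hV ha q hw⟩
  obtain ⟨z, hz, rfl⟩ :=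
    AddSubgroup.mem_map.1 (hV.isAddValuation.mem_of_qfcDefinable_coset hT happrox)
  refine ⟨z, hz.resolve_left ?_, rfl⟩
  rintro rfl
  exact hV.ne_zero_of_mem_gtTheta hy (smul_zero _)

end ValuedRMod

/-- every `K`-trivially valued `C`-minimal `R`-module is henselian. -/
theorem stmt_14 (K : Type u) [Field K] (φ : K →+* K) (R : Type v) [Ring R]
    (ι : K →+* R) (t : R) (hR : IsSkewPolyRing K φ R ι t)
    (M : Type w) [AddCommGroup M] [Module Rᵐᵒᵖ M]
    (Δ : Type x) [LinearOrder Δ] (infty : Δ) (act : Δ → R → Δ) (v : M → Δ)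
    (hV : IsValuedRMod K φ R ι t M Δ infty act v)
    (hKtriv : KTriviallyValued ι v)
    (hcmin : @CMinimal (cModLang R) PUnit.unit M (cModStructure R M (Crel v))) :
    HenselianVM t v := by
  intro s hs
  obtain ⟨a, ha, q, rfl⟩ := hR.exists_eq_add_mul_of_separable hs
  exact ⟨mapsTo_rsmul_add_mul hR hKtriv hV ha q, injOn_rsmul_add_mul hR hKtriv hV ha q,
    surjOn_rsmul_add_mul hR hKtriv hV hcmin ha q⟩
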